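/- arXiv:cs/0609161 — 2 statements merged into one kernel-verified Lean document; each statement's English description precedes it below -/
import Mathlib

section
/- Let λ be the enumeration of Λ^m (the increasing bijection ℕ₀ → Λ^m). Then λ(q^⌊m/2⌋ − 1) = c_m, i.e., the conductor c_m = q^m − q^⌊(m+1)/2⌋ is the (q^⌊m/2⌋ − 1)-th element of Λ^m. -/
/-- The Garcia–Stichtenoth tower of Weierstrass semigroups:
`Λ¹ = ℕ₀`, `Λᵐ = q·Λ^{m-1} ∪ {i : i ≥ qᵐ - q^⌊(m+1)/2⌋}` for `m ≥ 2`. -/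
def GSsemigroup (q : ℕ) : ℕ → Set ℕ
  | 0 => Set.univ
  | 1 => Set.univ
  | (m + 2) => (fun x => q * x) '' GSsemigroup q (m + 1) ∪
      {i : ℕ | q ^ (m + 2) - q ^ ((m + 3) / 2) ≤ i}

/-- `c_m = q^m - q^⌊(m+1)/2⌋`, the conductor of `Λ^m`. -/
def gsC (q m : ℕ) : ℕ := q ^ m - q ^ ((m + 1) / 2)

/-- `g_m = (q^⌊(m+1)/2⌋ - 1)(q^⌈(m-1)/2⌉ - 1)`, the genus of `Λ^m`
(note `⌈(m-1)/2⌉ = ⌊m/2⌋` for `m ≥ 1`). -/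
def gsG (q m : ℕ) : ℕ := (q ^ ((m + 1) / 2) - 1) * (q ^ (m / 2) - 1)

/-- `A_i = {j : q^{2i-1} - q^i ≤ j ≤ q^{2i-1} - q^{i-1} - 1}`. -/
def gsA (q i : ℕ) : Set ℕ :=
  {j : ℕ | q ^ (2 * i - 1) - q ^ i ≤ j ∧ j ≤ q ^ (2 * i - 1) - q ^ (i - 1) - 1}

/-- The enumeration `λ` of `Λ^m`: the increasing bijection `ℕ₀ → Λ^m`. -/
noncomputable def gsEnum (q m : ℕ) : ℕ → ℕ := Nat.nth (fun n => n ∈ GSsemigroup q m)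

/-- `ν_i = #{j : λ_i - λ_j ∈ Λ^m}` (the subtraction being in `ℤ`,
i.e. `∃ a ∈ Λ^m, λ_j + a = λ_i`). -/
noncomputable def gsNu (q m i : ℕ) : ℕ :=
  Set.ncard {j : ℕ | ∃ a ∈ GSsemigroup q m, gsEnum q m j + a = gsEnum q m i}

/-- The order (Feng–Rao) bound `δ_i = min {ν_j : j > i}`. -/
noncomputable def gsDelta (q m i : ℕ) : ℕ := sInf (gsNu q m '' {j : ℕ | i < j})

/-- The semigroup floor `⌊k⌋_{Λ^m}`: the largest element of `Λ^m` not exceeding `k`. -/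
noncomputable def gsFloor (q m k : ℕ) : ℕ := sSup {x ∈ GSsemigroup q m | x ≤ k}

/-- `λ⁻¹(x)` for `x ∈ Λ^m`: the number of elements of `Λ^m` below `x`. -/
noncomputable def gsLinv (q m x : ℕ) : ℕ := Set.ncard {y ∈ GSsemigroup q m | y < x}


/-!
Below its conductor `c_{m+2} = q · (q^{m+1} - q^{⌊(m+1)/2⌋})` the semigroup `Λ^{m+2}` is just
`q · Λ^{m+1}`, so it has as many elements there as `Λ^{m+1}` has below
`q^{m+1} - q^{⌊(m+1)/2⌋}`. That bound exceeds `c_{m+1}` by `q^{⌊(m+2)/2⌋} - q^{⌊(m+1)/2⌋}`,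
and every integer in between lies in `Λ^{m+1}`. By induction `Λ^m` therefore has
`q^{⌊m/2⌋} - 1` elements below `c_m`, so `c_m` is the element of that index.
-/

namespace Nat

theorem count_congr_of_lt {p p' : ℕ → Prop} [DecidablePred p] [DecidablePred p'] {n : ℕ}
    (h : ∀ k < n, p k ↔ p' k) : count p n = count p' n := by
  simp only [count_eq_card_filter_range]
  exact congrArg Finset.card (Finset.filter_congr fun k hk => h k (Finset.mem_range.mp hk))

theorem count_eq_count_add_sub_of_forall_le {p : ℕ → Prop} [DecidablePred p] {a n : ℕ}
    (han : a ≤ n) (h : ∀ k, a ≤ k → p k) : count p n = count p a + (n - a) := by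
  obtain ⟨b, rfl⟩ := Nat.exists_eq_add_of_le han
  rw [count_add, count_of_forall fun k _ => h (a + k) (Nat.le_add_right a k)]
  omega

theorem count_mul_image {q : ℕ} (hq : 0 < q) (S : Set ℕ) [DecidablePred (· ∈ S)]
    [DecidablePred (· ∈ (q * ·) '' S)] (d : ℕ) :
    count (· ∈ (q * ·) '' S) (q * d) = count (· ∈ S) d := by
  have hinj : Function.Injective (q * ·) := fun _ _ h => Nat.eq_of_mul_eq_mul_left hq h
  simp only [count_eq_card_filter_range]
  rw [← Finset.card_image_of_injective ((Finset.range d).filter (· ∈ S)) hinj]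
  congr 1
  ext n
  simp only [Finset.mem_image, Finset.mem_filter, Finset.mem_range]
  constructor
  · rintro ⟨hn, x, hx, rfl⟩
    exact ⟨x, ⟨(Nat.mul_lt_mul_left hq).mp hn, hx⟩, rfl⟩
  · rintro ⟨x, ⟨hx, hxS⟩, rfl⟩
    exact ⟨(Nat.mul_lt_mul_left hq).mpr hx, x, hxS, rfl⟩

end Nat

open Classical

theorem mem_GSsemigroup_of_gsC_le {q m x : ℕ} (h : gsC q m ≤ x) : x ∈ GSsemigroup q m := by
  match m with
  | 0 => trivial
  | 1 => trivial
  | _ + 2 => exact Or.inr h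

theorem gsC_add_two (q m : ℕ) : gsC q (m + 2) = q * (q ^ (m + 1) - q ^ ((m + 1) / 2)) := by
  rw [gsC, Nat.mul_sub, ← pow_succ', ← pow_succ']
  congr 2
  omega

theorem count_GSsemigroup_add_two_gsC {q : ℕ} (hq : 0 < q) (m : ℕ) :
    Nat.count (· ∈ GSsemigroup q (m + 2)) (gsC q (m + 2)) =
      Nat.count (· ∈ GSsemigroup q (m + 1)) (q ^ (m + 1) - q ^ ((m + 1) / 2)) := by
  rw [← Nat.count_mul_image hq (GSsemigroup q (m + 1)), ← gsC_add_two]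
  exact Nat.count_congr_of_lt fun k hk => or_iff_left fun (h : gsC q (m + 2) ≤ k) => h.not_gt hk

theorem count_GSsemigroup_gsC {q : ℕ} (hq : 0 < q) :
    ∀ m, Nat.count (· ∈ GSsemigroup q m) (gsC q m) = q ^ (m / 2) - 1
  | 0 => by simp [gsC]
  | 1 => by simp [gsC]
  | m + 2 => by
    have h1 : 1 ≤ q ^ ((m + 1) / 2) := Nat.one_le_pow _ _ hq
    have h2 : q ^ ((m + 1) / 2) ≤ q ^ ((m + 2) / 2) := Nat.pow_le_pow_right hq (by omega)
    have h3 : q ^ ((m + 2) / 2) ≤ q ^ (m + 1) := Nat.pow_le_pow_right hq (by omega)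
    have hc : gsC q (m + 1) = q ^ (m + 1) - q ^ ((m + 2) / 2) := rfl
    have hcd : gsC q (m + 1) ≤ q ^ (m + 1) - q ^ ((m + 1) / 2) := by omega
    rw [count_GSsemigroup_add_two_gsC hq, Nat.count_eq_count_add_sub_of_forall_le hcd
      fun _ => mem_GSsemigroup_of_gsC_le, count_GSsemigroup_gsC hq (m + 1), hc]
    omega

theorem stmt6_general (q : ℕ) (hq : 2 ≤ q) (m : ℕ) :
    gsEnum q m (q ^ (m / 2) - 1) = gsC q m := by
  rw [gsEnum, ← count_GSsemigroup_gsC (by omega : 0 < q) m]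
  exact Nat.nth_count (mem_GSsemigroup_of_gsC_le le_rfl)

/-- the conductor `c_m` is the `(q^⌊m/2⌋ - 1)`-th element of `Λ^m`. -/
theorem stmt6 (q : ℕ) (hq : 2 ≤ q) (m : ℕ) (hm : 1 ≤ m) :
    gsEnum q m (q ^ (m / 2) - 1) = gsC q m :=
  stmt6_general q hq m
end

section
/- The order bound δ^m_i = min{ν^m_j : j > i} for Λ^m satisfies: δ^m_i = 2 if i ≤ c_m − g_m; δ^m_i = i − g_m + 2 if i > 2c_m − g_m − 2; and if c_m − g_m < i ≤ 2c_m − g_m − 2, then δ^m_i = 2q^{m−α} + 2(i + 1 + g_m − c_m)/q^{2α−m−1} − 2c_{2m−2α+1}, where α = ⌈log_q(q^m − i − 1 + c_m − g_m)⌉. -/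
/-!
Below its conductor `c`, the semigroup `Λ^m` is sparse: an element `x` with
`x + q^⌊(m+k)/2⌋ < q^m` is divisible by `q^k`, and for `d < c` the map `x ↦ q x` identifies
`Λ^{m-1} ∩ [0, d/q]` with `Λ^m ∩ [0, d]`. Iterating the latter computes the counting function
of `Λ^m`; in particular `Λ^m` has `c - g` elements below `c`, so `λ_{c-g+t} = c + t`.

`ν` at an element `l` is the number of decompositions `l = a + b` in `Λ^m`. If
`d < c ≤ l - d`, the pairs `(a, l - a)` and `(l - a, a)` with `a ∈ Λ^m ∩ [0, d]` give
`ν ≥ 2 #(Λ^m ∩ [0, d])`. Equality holds at `l = c - 1 + K`, where `K` is the least multiple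
of `q^(2α-m-1)` above `d`: `Λ^m` has no element in `(d, K)`, and since `l ≡ -1 (mod q)` it
does not split into two multiples of `q`. Counting `Λ^m ∩ [0, d]` once more through
`x ↦ q x` gives the closed form of the middle range. Above `2c - 1` a decomposition fails
only through a gap, so `ν = l + 1 - 2g`.
-/

attribute [local instance] Classical.propDecidable

open Finset

noncomputable def splitCount (S : Set ℕ) (l : ℕ) : ℕ :=
  #{a ∈ range (l + 1) | a ∈ S ∧ l - a ∈ S}

section Splits

variable {S : Set ℕ} {c d l : ℕ}

theorem Nat.count_add_of_forall_le (hc : ∀ x, c ≤ x → x ∈ S) (t : ℕ) :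
    Nat.count (· ∈ S) (c + t) = Nat.count (· ∈ S) c + t := by
  rw [Nat.count_add, Nat.count_of_forall fun k _ => hc _ (Nat.le_add_right c k)]

theorem Nat.nth_count_add_of_forall_le (hc : ∀ x, c ≤ x → x ∈ S) (t : ℕ) :
    Nat.nth (· ∈ S) (Nat.count (· ∈ S) c + t) = c + t := by
  rw [← Nat.count_add_of_forall_le hc]
  exact Nat.nth_count (hc _ (Nat.le_add_right c t))

theorem ncard_nth_add_mem_eq_splitCount (hS : S.Infinite) (i : ℕ) :
    {j | ∃ a ∈ S, Nat.nth (· ∈ S) j + a = Nat.nth (· ∈ S) i}.ncard =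
      splitCount S (Nat.nth (· ∈ S) i) := by
  set l := Nat.nth (· ∈ S) i
  have himage : Nat.nth (· ∈ S) '' {j | ∃ a ∈ S, Nat.nth (· ∈ S) j + a = l} =
      {a ∈ range (l + 1) | a ∈ S ∧ l - a ∈ S} := by
    ext x
    simp only [Set.mem_image, coe_filter, mem_range]
    constructor
    · rintro ⟨j, ⟨a, ha, hja⟩, rfl⟩
      refine ⟨by omega, Nat.nth_mem_of_infinite hS j, ?_⟩
      rwa [show l - Nat.nth (· ∈ S) j = a by omega]
    · rintro ⟨hxl, hx, hlx⟩
      refine ⟨Nat.count (· ∈ S) x, ⟨l - x, hlx, ?_⟩, Nat.nth_count hx⟩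
      rw [Nat.nth_count hx]; omega
  rw [splitCount, ← Set.ncard_coe_finset, ← himage]
  exact (Set.ncard_image_of_injective _ (Nat.nth_injective hS)).symm

theorem two_le_splitCount (h0 : 0 ∈ S) (hl : l ∈ S) (hl0 : 0 < l) : 2 ≤ splitCount S l := by
  have hsub : {0, l} ⊆ {a ∈ range (l + 1) | a ∈ S ∧ l - a ∈ S} := by
    intro a ha
    rcases mem_insert.mp ha with rfl | ha
    · simpa using ⟨h0, hl⟩
    · rw [mem_singleton.mp ha]
      simpa using ⟨hl, h0⟩
  calc 2 = ({0, l} : Finset ℕ).card := (card_pair hl0.ne).symm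
    _ ≤ splitCount S l := card_le_card hsub

theorem two_mul_count_le_splitCount (hc : ∀ x, c ≤ x → x ∈ S) (hd : d < c)
    (hl : c + d ≤ l) :
    2 * Nat.count (· ∈ S) (d + 1) ≤ splitCount S l := by
  set small := {a ∈ range (d + 1) | a ∈ S}
  have hsmall : ∀ a ∈ small, a ≤ d ∧ a ∈ S := by
    intro a ha
    simp only [small, mem_filter, mem_range] at ha
    exact ⟨by omega, ha.2⟩
  have hsub :
      small ∪ small.image (l - ·) ⊆ {a ∈ range (l + 1) | a ∈ S ∧ l - a ∈ S} := by
    intro a ha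
    simp only [mem_filter, mem_range]
    rcases mem_union.mp ha with ha | ha
    · obtain ⟨had, haS⟩ := hsmall a ha
      exact ⟨by omega, haS, hc _ (by omega)⟩
    · obtain ⟨s, hs, rfl⟩ := mem_image.mp ha
      obtain ⟨hsd, hsS⟩ := hsmall s hs
      exact ⟨by omega, hc _ (by omega), by rwa [show l - (l - s) = s by omega]⟩
  have hinj : Set.InjOn (l - ·) small := fun x hx y hy hxy => by
    have := (hsmall x hx).1; have := (hsmall y hy).1; simp only at hxy; omega
  have hdisj : Disjoint small (small.image (l - ·)) := by
    rw [disjoint_left]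
    intro x hx hx'
    obtain ⟨s, hs, rfl⟩ := mem_image.mp hx'
    have := (hsmall _ hx).1; have := (hsmall s hs).1
    omega
  calc 2 * Nat.count (· ∈ S) (d + 1) = (small ∪ small.image (l - ·)).card := by
        rw [card_union_of_disjoint hdisj, card_image_of_injOn hinj,
          Nat.count_eq_card_filter_range]
        ring
    _ ≤ splitCount S l := card_le_card hsub

theorem splitCount_le_two_mul_count
    (hshort : ∀ a ≤ l, a ∈ S → l - a ∈ S → a ≤ d ∨ l - a ≤ d) :
    splitCount S l ≤ 2 * Nat.count (· ∈ S) (d + 1) := by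
  set small := {a ∈ range (d + 1) | a ∈ S}
  have hsub :
      {a ∈ range (l + 1) | a ∈ S ∧ l - a ∈ S} ⊆ small ∪ small.image (l - ·) := by
    intro a ha
    simp only [mem_filter, mem_range] at ha
    obtain ⟨hal, haS, hlaS⟩ := ha
    rcases hshort a (by omega) haS hlaS with had | hlad
    · exact mem_union_left _ (by simpa [small] using ⟨by omega, haS⟩)
    · refine mem_union_right _ (mem_image.mpr ⟨l - a, ?_, by omega⟩)
      simpa [small] using ⟨by omega, hlaS⟩
  calc splitCount S l ≤ (small ∪ small.image (l - ·)).card := card_le_card hsub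
    _ ≤ small.card + small.card :=
        (card_union_le _ _).trans (Nat.add_le_add_left card_image_le _)
    _ = 2 * Nat.count (· ∈ S) (d + 1) := by rw [Nat.count_eq_card_filter_range]; ring

theorem splitCount_add_two_mul_sub_count (hc : ∀ x, c ≤ x → x ∈ S) (hl : 2 * c ≤ l + 1) :
    splitCount S l + 2 * (c - Nat.count (· ∈ S) c) = l + 1 := by
  set gaps := {a ∈ range (l + 1) | a ∉ S}
  have hgap : ∀ a ∈ gaps, a < c ∧ a ∉ S := by
    intro a ha
    simp only [gaps, mem_filter] at ha
    exact ⟨not_le.mp fun h => ha.2 (hc a h), ha.2⟩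
  have hcount : gaps.card = c - Nat.count (· ∈ S) c := by
    have hall : #{a ∈ range (l + 1) | a ∈ S} + gaps.card = #(range (l + 1)) :=
      card_filter_add_card_filter_not _
    have hcl := Nat.count_add_of_forall_le hc (l + 1 - c)
    rw [show c + (l + 1 - c) = l + 1 by omega, Nat.count_eq_card_filter_range] at hcl
    rw [card_range] at hall
    have := Nat.count_le (p := (· ∈ S)) (n := c)
    omega
  have hnot :
      {a ∈ range (l + 1) | ¬(a ∈ S ∧ l - a ∈ S)} = gaps ∪ gaps.image (l - ·) := by
    ext a
    simp only [gaps, mem_filter, mem_range, mem_union, mem_image]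
    constructor
    · rintro ⟨hal, ha⟩
      by_cases haS : a ∈ S
      · exact Or.inr ⟨l - a, ⟨by omega, fun h => ha ⟨haS, h⟩⟩, by omega⟩
      · exact Or.inl ⟨hal, haS⟩
    · rintro (⟨hal, haS⟩ | ⟨b, ⟨hbl, hbS⟩, rfl⟩)
      · exact ⟨hal, fun h => haS h.1⟩
      · have := (hgap b (mem_filter.mpr ⟨mem_range.mpr hbl, hbS⟩)).1
        exact ⟨by omega, fun h => hbS (by rw [show b = l - (l - b) by omega]; exact h.2)⟩
  have hinj : Set.InjOn (l - ·) gaps := fun x hx y hy hxy => by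
    have := (hgap x hx).1; have := (hgap y hy).1; simp only at hxy; omega
  have hdisj : Disjoint gaps (gaps.image (l - ·)) := by
    rw [disjoint_left]
    intro x hx hx'
    obtain ⟨s, hs, rfl⟩ := mem_image.mp hx'
    have := (hgap _ hx).1; have := (hgap s hs).1
    omega
  have hall := card_filter_add_card_filter_not (s := range (l + 1))
    (fun a => a ∈ S ∧ l - a ∈ S)
  rw [card_range, hnot, card_union_of_disjoint hdisj,
    card_image_of_injOn hinj, hcount] at hall
  rw [splitCount]
  omega

end Splits

theorem gsC_add_one {q : ℕ} (hq : 0 < q) (m : ℕ) : gsC q m + 1 = gsG q m + q ^ (m / 2) := by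
  have hab : q ^ m = q ^ (m / 2) * q ^ ((m + 1) / 2) := by rw [← pow_add]; congr 1; omega
  have ha : 1 ≤ q ^ (m / 2) := Nat.one_le_pow _ _ hq
  have hb : 1 ≤ q ^ ((m + 1) / 2) := Nat.one_le_pow _ _ hq
  have hble : q ^ ((m + 1) / 2) ≤ q ^ m := Nat.pow_le_pow_right hq (by omega)
  unfold gsC gsG
  rw [hab] at hble ⊢
  zify [ha, hb, hble]
  ring

theorem gsC_succ (q m : ℕ) : gsC q (m + 1) = q * (q ^ m - q ^ (m / 2)) := by
  rw [gsC, Nat.mul_sub, ← pow_succ', ← pow_succ', show m / 2 + 1 = (m + 1 + 1) / 2 by omega]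

theorem dvd_gsC (q : ℕ) {m : ℕ} (hm : 1 ≤ m) : q ∣ gsC q m := by
  obtain ⟨m, rfl⟩ : ∃ k, m = k + 1 := ⟨m - 1, by omega⟩
  exact gsC_succ q m ▸ dvd_mul_right q _

namespace GSsemigroup

variable {q m x : ℕ}

theorem mem_of_gsC_le (h : gsC q m ≤ x) : x ∈ GSsemigroup q m := by
  match m with
  | 0 => trivial
  | 1 => trivial
  | m + 2 => exact Or.inr h

theorem zero_mem (q : ℕ) : ∀ m, 0 ∈ GSsemigroup q m
  | 0 => trivial
  | 1 => trivial
  | m + 2 => Or.inl ⟨0, zero_mem q (m + 1), mul_zero q⟩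

theorem infinite (q m : ℕ) : (GSsemigroup q m).Infinite :=
  (Set.Ici_infinite (gsC q m)).mono fun _ => mem_of_gsC_le

theorem pow_dvd_of_mem (hq : 0 < q) :
    ∀ {m k x : ℕ}, x ∈ GSsemigroup q m → x + q ^ ((m + k) / 2) < q ^ m → q ^ k ∣ x
  | _, 0, _, _, _ => one_dvd _
  | 0, k + 1, x, _, h => by
    have := Nat.one_le_pow ((0 + (k + 1)) / 2) q hq
    simp at h; omega
  | 1, k + 1, x, _, h => by
    have := Nat.pow_le_pow_right hq (show 1 ≤ (1 + (k + 1)) / 2 by omega)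
    rw [pow_one] at this h; omega
  | m + 2, k + 1, _, Or.inl ⟨y, hy, rfl⟩, h => by
    have hy' : y + q ^ ((m + 1 + k) / 2) < q ^ (m + 1) := by
      refine Nat.lt_of_mul_lt_mul_left (a := q) ?_
      calc q * (y + q ^ ((m + 1 + k) / 2)) = q * y + q ^ ((m + 2 + (k + 1)) / 2) := by
            rw [mul_add, ← pow_succ', show (m + 1 + k) / 2 + 1 = (m + 2 + (k + 1)) / 2 by omega]
        _ < q ^ (m + 2) := h
        _ = q * q ^ (m + 1) := pow_succ' q (m + 1)
    rw [pow_succ']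
    exact mul_dvd_mul_left q (pow_dvd_of_mem hq hy hy')
  | m + 2, k + 1, x, Or.inr hx, h => by
    have h1 := Nat.pow_le_pow_right hq (show (m + 3) / 2 ≤ m + 2 by omega)
    have h2 := Nat.pow_le_pow_right hq (show (m + 3) / 2 ≤ (m + 2 + (k + 1)) / 2 by omega)
    change q ^ (m + 2) - q ^ ((m + 3) / 2) ≤ x at hx
    omega

theorem dvd_of_mem_of_lt_gsC (hq : 0 < q) (hx : x ∈ GSsemigroup q m) (hlt : x < gsC q m) :
    q ∣ x := by
  have := Nat.pow_le_pow_right hq (show (m + 1) / 2 ≤ m by omega)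
  simpa using pow_dvd_of_mem hq (k := 1) hx (by unfold gsC at hlt; omega)

theorem mem_succ_iff_of_lt_gsC (hm : 1 ≤ m) (hx : x < gsC q (m + 1)) :
    x ∈ GSsemigroup q (m + 1) ↔ ∃ y ∈ GSsemigroup q m, q * y = x := by
  obtain ⟨m, rfl⟩ : ∃ k, m = k + 1 := ⟨m - 1, by omega⟩
  refine ⟨fun h => h.resolve_right fun hx' => ?_, Or.inl⟩
  exact absurd hx' (not_le.mpr hx)

theorem count_succ (hq : 0 < q) (hm : 1 ≤ m) {d : ℕ} (hd : d < gsC q (m + 1)) :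
    Nat.count (· ∈ GSsemigroup q (m + 1)) (d + 1) =
      Nat.count (· ∈ GSsemigroup q m) (d / q + 1) := by
  have himage : {x ∈ range (d + 1) | x ∈ GSsemigroup q (m + 1)} =
      {y ∈ range (d / q + 1) | y ∈ GSsemigroup q m}.image (q * ·) := by
    ext x
    simp only [mem_filter, mem_range, mem_image, Nat.lt_succ_iff]
    constructor
    · rintro ⟨hxd, hx⟩
      obtain ⟨y, hy, rfl⟩ := (mem_succ_iff_of_lt_gsC hm (by omega)).mp hx
      exact ⟨y, ⟨(Nat.le_div_iff_mul_le hq).mpr (by linarith), hy⟩, rfl⟩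
    · rintro ⟨y, ⟨hyd, hy⟩, rfl⟩
      have hyd' := (Nat.le_div_iff_mul_le hq).mp hyd
      exact ⟨by linarith, (mem_succ_iff_of_lt_gsC hm (by linarith)).mpr ⟨y, hy, rfl⟩⟩
  rw [Nat.count_eq_card_filter_range, Nat.count_eq_card_filter_range, himage,
    card_image_of_injective _ (mul_right_injective₀ hq.ne')]

end GSsemigroup

namespace GSsemigroup

variable {q : ℕ}

theorem count_gsC (hq : 2 ≤ q) {m : ℕ} (hm : 1 ≤ m) :
    Nat.count (· ∈ GSsemigroup q m) (gsC q m) + 1 = q ^ (m / 2) := by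
  induction m, hm using Nat.le_induction with
  | base => simp [gsC]
  | succ m hm ih =>
    have hlt : q ^ (m / 2) < q ^ m := Nat.pow_lt_pow_right hq (by omega)
    have hle : q ^ (m / 2) ≤ q ^ ((m + 1) / 2) := Nat.pow_le_pow_right (by omega) (by omega)
    have hle' : q ^ ((m + 1) / 2) ≤ q ^ m := Nat.pow_le_pow_right (by omega) (by omega)
    obtain ⟨v, hv⟩ : ∃ v, q ^ m - q ^ (m / 2) = v + 1 :=
      ⟨q ^ m - q ^ (m / 2) - 1, by omega⟩
    have hc : gsC q (m + 1) = q * v + (q - 1) + 1 := by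
      rw [gsC_succ, hv, mul_add, mul_one]; omega
    have hdiv : (q * v + (q - 1)) / q + 1 = gsC q m + (q ^ ((m + 1) / 2) - q ^ (m / 2)) := by
      rw [Nat.mul_add_div (by omega), Nat.div_eq_of_lt (by omega)]
      unfold gsC; omega
    rw [hc, count_succ (by omega) hm (by omega), hdiv,
      Nat.count_add_of_forall_le (fun _ => mem_of_gsC_le)]
    omega

theorem count_add_gsC (hq : 2 ≤ q) :
    ∀ e u d : ℕ, q ^ (u + e) + d < q ^ (2 * u + e + 1) →
      q ^ (2 * u + e + 1) ≤ q ^ (u + e + 1) + d →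
      Nat.count (· ∈ GSsemigroup q (2 * u + e + 1)) (d + 1) + gsC q (2 * u + 1) =
        q ^ u + d / q ^ e
  | 0, u, d, _, h2 => by
    simp only [add_zero, pow_zero, Nat.div_one] at h2 ⊢
    have hc : gsC q (2 * u + 1) = q ^ (2 * u + 1) - q ^ (u + 1) := by
      rw [gsC, show (2 * u + 1 + 1) / 2 = u + 1 by omega]
    have hcount := count_gsC hq (m := 2 * u + 1) (by omega)
    rw [show (2 * u + 1) / 2 = u by omega] at hcount
    rw [show d + 1 = gsC q (2 * u + 1) + (d + 1 - gsC q (2 * u + 1)) by omega,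
      Nat.count_add_of_forall_le (fun _ => mem_of_gsC_le)]
    omega
  | e + 1, u, d, h1, h2 => by
    have hq0 : 0 < q := by omega
    have e1 : q ^ (u + (e + 1)) = q * q ^ (u + e) := by ring
    have e2 : q ^ (2 * u + (e + 1) + 1) = q * q ^ (2 * u + e + 1) := by ring
    have e3 : q ^ (u + (e + 1) + 1) = q * q ^ (u + e + 1) := by ring
    rw [e1, e2] at h1
    rw [e2, e3] at h2
    have hd : d < gsC q (2 * u + e + 1 + 1) := by
      have := Nat.pow_le_pow_right hq0 (show (2 * u + e + 1 + 1 + 1) / 2 ≤ u + e + 1 by omega)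
      have := pow_succ' q (2 * u + e + 1)
      have := pow_succ' q (u + e)
      unfold gsC
      omega
    have h1' : q ^ (u + e) + d / q < q ^ (2 * u + e + 1) := by
      rw [← Nat.mul_add_div hq0, Nat.div_lt_iff_lt_mul hq0]; linarith
    have h2' : q ^ (2 * u + e + 1) ≤ q ^ (u + e + 1) + d / q := by
      rw [← Nat.mul_add_div hq0, Nat.le_div_iff_mul_le hq0]; linarith
    rw [show 2 * u + (e + 1) + 1 = 2 * u + e + 1 + 1 by ring, count_succ hq0 (by omega) hd,
      count_add_gsC hq e u (d / q) h1' h2', Nat.div_div_eq_div_mul, pow_succ']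

end GSsemigroup

theorem gsC_add_pow {q : ℕ} (hq : 0 < q) (m : ℕ) : gsC q m + q ^ ((m + 1) / 2) = q ^ m :=
  Nat.sub_add_cancel (Nat.pow_le_pow_right hq (by omega))

theorem gsG_le_gsC {q : ℕ} (hq : 0 < q) (m : ℕ) : gsG q m ≤ gsC q m := by
  have := gsC_add_one hq m
  have := Nat.one_le_pow (m / 2) q hq
  omega

namespace GSsemigroup

variable {q m : ℕ}

theorem count_gsC_eq (hq : 2 ≤ q) (hm : 1 ≤ m) :
    Nat.count (· ∈ GSsemigroup q m) (gsC q m) = gsC q m - gsG q m := by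
  have := count_gsC hq hm
  have := gsC_add_one (by omega : 0 < q) m
  omega

theorem notMem_of_lt_of_lt {u e d x : ℕ} (hq : 2 ≤ q)
    (hd : q ^ (u + e) + d < q ^ (2 * u + e + 1)) (hdx : d < x) (hxd : x < q ^ e * (d / q ^ e + 1)) :
    x ∉ GSsemigroup q (2 * u + e + 1) := by
  intro hx
  have hqe : 0 < q ^ e := pow_pos (by omega) e
  have hT : (q ^ (2 * u + 1) - q ^ u) * q ^ e = q ^ (2 * u + e + 1) - q ^ (u + e) := by
    rw [Nat.sub_mul, ← pow_add, ← pow_add, show 2 * u + 1 + e = 2 * u + e + 1 by ring]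
  have hK : d / q ^ e + 1 ≤ q ^ (2 * u + 1) - q ^ u := by
    rw [Nat.add_one_le_iff, Nat.div_lt_iff_lt_mul hqe, hT]
    omega
  have hxK : x + q ^ (u + e) < q ^ (2 * u + e + 1) := by
    have := Nat.mul_le_mul_right (q ^ e) hK
    rw [hT, mul_comm] at this
    omega
  obtain ⟨w, rfl⟩ := pow_dvd_of_mem (k := e) (by omega) hx
    (by rwa [show (2 * u + e + 1 + e) / 2 = u + e by omega])
  have h1 : d / q ^ e < w := (Nat.div_lt_iff_lt_mul hqe).mpr (by linarith)
  have h2 : w < d / q ^ e + 1 := Nat.lt_of_mul_lt_mul_left hxd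
  omega

theorem exists_splitCount_le {u e d : ℕ} (hq : 2 ≤ q) (he : 1 ≤ e)
    (hd : q ^ (u + e) + d < q ^ (2 * u + e + 1)) :
    ∃ l, gsC q (2 * u + e + 1) + d ≤ l ∧
      splitCount (GSsemigroup q (2 * u + e + 1)) l ≤
        2 * Nat.count (· ∈ GSsemigroup q (2 * u + e + 1)) (d + 1) := by
  set c := gsC q (2 * u + e + 1)
  set K := q ^ e * (d / q ^ e + 1)
  have hdK : d < K := Nat.lt_mul_div_succ d (pow_pos (by omega) e)
  have hdc : d < c := by
    have := Nat.pow_le_pow_right (by omega : 0 < q)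
      (show (2 * u + e + 1 + 1) / 2 ≤ u + e by omega)
    unfold c gsC; omega
  have hlow : ∀ x ∈ GSsemigroup q (2 * u + e + 1), d < x → K ≤ x := fun x hx hdx =>
    not_lt.mp fun hxK => notMem_of_lt_of_lt hq hd hdx hxK hx
  refine ⟨c - 1 + K, by omega, splitCount_le_two_mul_count fun a hal ha hb => ?_⟩
  by_contra! hshort
  have hqc : q ∣ c := dvd_gsC q (by omega)
  have hqK : q ∣ K := Dvd.dvd.mul_right (dvd_pow_self q (by omega)) _
  have hsmall : a < c ∧ c - 1 + K - a < c := by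
    have := hlow a ha hshort.1; have := hlow _ hb hshort.2; omega
  have hsum := dvd_add (dvd_of_mem_of_lt_gsC (by omega) ha hsmall.1)
    (dvd_of_mem_of_lt_gsC (by omega) hb hsmall.2)
  rw [Nat.add_sub_cancel' hal] at hsum
  have hsucc : q ∣ c - 1 + K + 1 := by
    rw [show c - 1 + K + 1 = c + K by omega]; exact dvd_add hqc hqK
  have := Nat.le_of_dvd one_pos ((Nat.dvd_add_right hsum).mp hsucc)
  omega

end GSsemigroup

section OrderBound

variable {q m : ℕ}

theorem gsNu_eq_splitCount (q m i : ℕ) :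
    gsNu q m i = splitCount (GSsemigroup q m) (gsEnum q m i) :=
  ncard_nth_add_mem_eq_splitCount (GSsemigroup.infinite q m) i

theorem gsEnum_add (hq : 2 ≤ q) (hm : 1 ≤ m) (t : ℕ) :
    gsEnum q m (gsC q m - gsG q m + t) = gsC q m + t := by
  rw [← GSsemigroup.count_gsC_eq hq hm]
  exact Nat.nth_count_add_of_forall_le (fun _ => GSsemigroup.mem_of_gsC_le) t

theorem gsEnum_strictMono (q m : ℕ) : StrictMono (gsEnum q m) :=
  Nat.nth_strictMono (GSsemigroup.infinite q m)

theorem gsEnum_count {l : ℕ} (hl : l ∈ GSsemigroup q m) :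
    gsEnum q m (Nat.count (· ∈ GSsemigroup q m) l) = l :=
  Nat.nth_count hl

theorem two_le_gsNu {k : ℕ} (hk : 0 < k) : 2 ≤ gsNu q m k := by
  rw [gsNu_eq_splitCount]
  exact two_le_splitCount (GSsemigroup.zero_mem q m)
    (Nat.nth_mem_of_infinite (GSsemigroup.infinite q m) k)
    (hk.trans_le (gsEnum_strictMono q m).le_apply)

theorem gsDelta_eq {i j v : ℕ} (hij : i < j) (hj : gsNu q m j = v)
    (hle : ∀ k, i < k → v ≤ gsNu q m k) : gsDelta q m i = v :=
  IsLeast.csInf_eq ⟨⟨j, hij, hj⟩, by rintro _ ⟨k, hk, rfl⟩; exact hle k hk⟩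

theorem splitCount_gsC_add_one (hq : 2 ≤ q) (hm : 1 ≤ m) :
    splitCount (GSsemigroup q m) (gsC q m + 1) = 2 := by
  refine le_antisymm ?_ (two_le_splitCount (GSsemigroup.zero_mem q m)
    (GSsemigroup.mem_of_gsC_le (Nat.le_succ _)) (Nat.succ_pos _))
  have hone : Nat.count (· ∈ GSsemigroup q m) 1 = 1 := by
    simp [Nat.count_succ, GSsemigroup.zero_mem]
  suffices hshort : ∀ a ≤ gsC q m + 1, a ∈ GSsemigroup q m →
      gsC q m + 1 - a ∈ GSsemigroup q m → a ≤ 0 ∨ gsC q m + 1 - a ≤ 0 by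
    simpa [hone] using splitCount_le_two_mul_count hshort
  intro a hal ha hb
  by_contra! hshort
  have hqc : q ∣ gsC q m := dvd_gsC q hm
  have hc : q ≤ gsC q m := Nat.le_of_dvd (by omega) hqc
  have hndvd : ¬ q ∣ 1 := fun h => by have := Nat.le_of_dvd one_pos h; omega
  rcases Nat.lt_or_ge a (gsC q m) with hac | hac
  · rcases Nat.lt_or_ge (gsC q m + 1 - a) (gsC q m) with hbc | hbc
    · have hsum := dvd_add (GSsemigroup.dvd_of_mem_of_lt_gsC (by omega) ha hac)
        (GSsemigroup.dvd_of_mem_of_lt_gsC (by omega) hb hbc)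
      rw [Nat.add_sub_cancel' hal] at hsum
      exact hndvd ((Nat.dvd_add_right hqc).mp hsum)
    · have := GSsemigroup.dvd_of_mem_of_lt_gsC (by omega) ha hac
      exact hndvd (by rwa [show a = 1 by omega] at this)
  · have := GSsemigroup.dvd_of_mem_of_lt_gsC (by omega) hb (by omega)
    exact hndvd (by rwa [show gsC q m + 1 - a = 1 by omega] at this)

theorem gsDelta_eq_two (hq : 2 ≤ q) (hm : 1 ≤ m) {i : ℕ} (hi : i ≤ gsC q m - gsG q m) :
    gsDelta q m i = 2 := by
  refine gsDelta_eq (j := gsC q m - gsG q m + 1) (by omega) ?_ fun k hk => ?_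
  · rw [gsNu_eq_splitCount, gsEnum_add hq hm, splitCount_gsC_add_one hq hm]
  · exact two_le_gsNu (by omega)

theorem gsDelta_eq_sub_gsG_add_two (hq : 2 ≤ q) (hm : 1 ≤ m) {i : ℕ}
    (hi : 2 * gsC q m - gsG q m - 2 < i) : gsDelta q m i = i - gsG q m + 2 := by
  have hgc := gsG_le_gsC (by omega : 0 < q) m
  have hnu : ∀ k, i < k → gsNu q m k = k - gsG q m + 1 := by
    intro k hk
    have hk' : gsEnum q m k = k + gsG q m := by
      rw [show k = gsC q m - gsG q m + (k + gsG q m - gsC q m) by omega, gsEnum_add hq hm]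
      omega
    have := splitCount_add_two_mul_sub_count (S := GSsemigroup q m) (c := gsC q m)
      (l := gsEnum q m k) (fun _ => GSsemigroup.mem_of_gsC_le) (by omega)
    rw [GSsemigroup.count_gsC_eq hq hm] at this
    rw [gsNu_eq_splitCount]
    omega
  have hgi : 2 ≤ i + 1 - gsG q m + 1 := hnu (i + 1) (by omega) ▸ two_le_gsNu (by omega)
  exact gsDelta_eq (j := i + 1) (by omega) (by rw [hnu _ (by omega)]; omega)
    fun k hk => by rw [hnu k hk]; omega

theorem gsDelta_eq_two_mul_count (hq : 2 ≤ q) (hm : 1 ≤ m) {i d l : ℕ} (hd : d < gsC q m)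
    (hi : i + 1 + gsG q m = gsC q m + d) (hl : gsC q m + d ≤ l)
    (hsplit : splitCount (GSsemigroup q m) l ≤ 2 * Nat.count (· ∈ GSsemigroup q m) (d + 1)) :
    gsDelta q m i = 2 * Nat.count (· ∈ GSsemigroup q m) (d + 1) := by
  have hgc := gsG_le_gsC (by omega : 0 < q) m
  have hmono := gsEnum_strictMono q m
  have hi' : gsEnum q m (i + 1) = gsC q m + d := by
    rw [show i + 1 = gsC q m - gsG q m + d by omega, gsEnum_add hq hm]
  have hlS : l ∈ GSsemigroup q m := GSsemigroup.mem_of_gsC_le (by omega)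
  have hlow : ∀ k, i < k → 2 * Nat.count (· ∈ GSsemigroup q m) (d + 1) ≤ gsNu q m k := by
    intro k hk
    rw [gsNu_eq_splitCount]
    refine two_mul_count_le_splitCount (fun _ => GSsemigroup.mem_of_gsC_le) hd ?_
    exact hi' ▸ hmono.monotone (by omega : i + 1 ≤ k)
  have hij : i < Nat.count (· ∈ GSsemigroup q m) l := by
    have : gsEnum q m (i + 1) ≤ gsEnum q m (Nat.count (· ∈ GSsemigroup q m) l) := by
      rwa [hi', gsEnum_count hlS]
    have := hmono.le_iff_le.mp this
    omega
  refine gsDelta_eq hij (le_antisymm ?_ (hlow _ hij)) hlow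
  rwa [gsNu_eq_splitCount, gsEnum_count hlS]

theorem exists_eq_of_eq_clog (hq : 2 ≤ q) {d α : ℕ} (hd : d < gsC q m)
    (hα : α = Nat.clog q (q ^ m - d)) :
    ∃ u e, m = 2 * u + e + 1 ∧ α = u + e + 1 ∧ 1 ≤ e ∧
      q ^ (u + e) + d < q ^ (2 * u + e + 1) ∧ q ^ (2 * u + e + 1) ≤ q ^ (u + e + 1) + d := by
  have hcm := gsC_add_pow (by omega : 0 < q) m
  have hpos := Nat.one_le_pow ((m + 1) / 2) q (by omega)
  have hup : q ^ m - d ≤ q ^ α := hα ▸ Nat.le_pow_clog hq _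
  have hlow : q ^ (α - 1) < q ^ m - d := hα ▸ Nat.pow_pred_clog_lt_self hq (by omega)
  have hαm : α - 1 < m := (Nat.pow_lt_pow_iff_right hq).mp (by omega)
  have hα : (m + 1) / 2 < α := (Nat.pow_lt_pow_iff_right hq).mp (by omega)
  refine ⟨m - α, 2 * α - m - 1, by omega, by omega, by omega, ?_⟩
  rw [show 2 * (m - α) + (2 * α - m - 1) + 1 = m by omega,
    show m - α + (2 * α - m - 1) = α - 1 by omega, show α - 1 + 1 = α by omega]
  omega

end OrderBound

/-- the explicit formula for the order bound `δ^m_i`. -/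
theorem stmt18 (q : ℕ) (hq : 2 ≤ q) (m : ℕ) (hm : 1 ≤ m) (i : ℕ) :
    (i ≤ gsC q m - gsG q m → gsDelta q m i = 2) ∧
    (2 * gsC q m - gsG q m - 2 < i → gsDelta q m i = i - gsG q m + 2) ∧
    (gsC q m - gsG q m < i → i ≤ 2 * gsC q m - gsG q m - 2 →
      ∀ α : ℕ, α = Nat.clog q (q ^ m - i - 1 + gsC q m - gsG q m) →
        gsDelta q m i =
          2 * q ^ (m - α) + 2 * ((i + 1 + gsG q m - gsC q m) / q ^ (2 * α - m - 1)) -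
            2 * gsC q (2 * m - 2 * α + 1)) := by
  refine ⟨gsDelta_eq_two hq hm, gsDelta_eq_sub_gsG_add_two hq hm, fun hlo hhi α hα => ?_⟩
  have hcg := gsC_add_one (by omega : 0 < q) m
  have hcm := gsC_add_pow (by omega : 0 < q) m
  have hpow := Nat.pow_le_pow_right (by omega : 0 < q) (show m / 2 ≤ (m + 1) / 2 by omega)
  set d := i + 1 + gsG q m - gsC q m
  have hd : d < gsC q m := by omega
  rw [show q ^ m - i - 1 + gsC q m - gsG q m = q ^ m - d by omega] at hα
  obtain ⟨u, e, rfl, rfl, he, h1, h2⟩ := exists_eq_of_eq_clog hq hd hα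
  obtain ⟨l, hl, hsplit⟩ := GSsemigroup.exists_splitCount_le hq he h1
  have hcount := GSsemigroup.count_add_gsC hq e u d h1 h2
  rw [gsDelta_eq_two_mul_count hq hm hd (by omega) hl hsplit,
    show 2 * u + e + 1 - (u + e + 1) = u by omega,
    show 2 * (u + e + 1) - (2 * u + e + 1) - 1 = e by omega,
    show 2 * (2 * u + e + 1) - 2 * (u + e + 1) + 1 = 2 * u + 1 by omega]
  omega
end
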